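/- arXiv:2005.00378 — 2 statements merged into one kernel-verified Lean document; each statement's English description precedes it below -/
import Mathlib

section
/- Let M ⊆ H²(D,Cⁿ) be a closed subspace not all of whose elements vanish at 0, let W := M ⊖ (M ∩ zH²(D,Cⁿ)), and let W₁,…,W_r be an orthonormal basis of W. Then the vectors W₁(0),…,W_r(0) are linearly independent in Cⁿ. -/
open MeasureTheory Complex Real
open scoped ENNReal ComplexConjugate

noncomputable section

namespace Paper

instance : Fact (0 < 2 * Real.pi) := ⟨by positivity⟩

abbrev Tc : Type := AddCircle (2 * Real.pi)
abbrev μ0 : MeasureTheory.Measure Tc := AddCircle.haarAddCircle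
abbrev L2 : Type := MeasureTheory.Lp ℂ 2 μ0

def coeffCLM (n : ℤ) : L2 →L[ℂ] ℂ :=
  LinearMap.mkContinuous
    { toFun := fun f => fourierBasis.repr f n
      map_add' := fun f g => by simp
      map_smul' := fun c f => by simp }
    1
    (fun f => by
      have h := lp.norm_apply_le_norm (p := 2) (by norm_num) (fourierBasis.repr f) n
      simpa using h)

def cf (f : L2) (n : ℤ) : ℂ := coeffCLM n f

/-- The subspace of `L²(𝕋)` of functions whose Fourier coefficients of index `< k` vanish.
Thus `coeffGE 0 = H²` and `coeffGE k = zᵏH²` for `k ≥ 0`. -/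
def coeffGE (k : ℤ) : Submodule ℂ L2 :=
  ⨅ (n : ℤ) (_ : n < k), LinearMap.ker (coeffCLM n : L2 →ₗ[ℂ] ℂ)

/-- The subspace of `L²(𝕋)` of functions whose Fourier coefficients of index `≥ k` vanish.
Thus `coeffLT 0 = conj (H²₀) = (H²)^⊥`. -/
def coeffLT (k : ℤ) : Submodule ℂ L2 :=
  ⨅ (n : ℤ) (_ : k ≤ n), LinearMap.ker (coeffCLM n : L2 →ₗ[ℂ] ℂ)

/-- The Hardy space `H²` of the unit disc, viewed as a subspace of `L²(𝕋)`. -/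
def H2 : Submodule ℂ L2 := coeffGE 0

lemma mem_coeffGE {k : ℤ} {f : L2} : f ∈ coeffGE k ↔ ∀ n < k, cf f n = 0 := by
  simp [coeffGE, cf, Submodule.mem_iInf, LinearMap.mem_ker]

lemma isClosed_coeffGE (k : ℤ) : IsClosed ((coeffGE k : Submodule ℂ L2) : Set L2) := by
  have h : ((coeffGE k : Submodule ℂ L2) : Set L2)
      = ⋂ (n : ℤ) (_ : n < k), (LinearMap.ker (coeffCLM n : L2 →ₗ[ℂ] ℂ) : Set L2) := by
    ext f
    simp [coeffGE, Submodule.mem_iInf, Set.mem_iInter]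
  rw [h]
  exact isClosed_iInter fun n => isClosed_iInter fun _ => ContinuousLinearMap.isClosed_ker (coeffCLM n)

end Paper
namespace Paper

open scoped Classical in
/-- Multiplication by an `L^∞` function, as a linear map on `L²(𝕋)` (defined to be `0` if the
symbol is not essentially bounded). -/
def mulLM (g : Tc → ℂ) : L2 →ₗ[ℂ] L2 :=
  if hg : MemLp g ⊤ μ0 then
    { toFun := fun f => ((Lp.memLp f).smul (r := 2) hg).toLp (g • ⇑f)
      map_add' := fun f₁ f₂ => by
        apply Lp.ext
        filter_upwards [MemLp.coeFn_toLp ((Lp.memLp (f₁ + f₂)).smul (r := 2) hg),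
          MemLp.coeFn_toLp ((Lp.memLp f₁).smul (r := 2) hg),
          MemLp.coeFn_toLp ((Lp.memLp f₂).smul (r := 2) hg),
          Lp.coeFn_add f₁ f₂,
          Lp.coeFn_add (((Lp.memLp f₁).smul (r := 2) hg).toLp (g • ⇑f₁))
            (((Lp.memLp f₂).smul (r := 2) hg).toLp (g • ⇑f₂))] with x h0 h1 h2 h3 h4
        rw [h0, h4, Pi.add_apply, h1, h2]
        simp only [Pi.smul_apply', Pi.add_apply, h3, smul_add]
      map_smul' := fun c f => by
        apply Lp.ext
        filter_upwards [MemLp.coeFn_toLp ((Lp.memLp (c • f)).smul (r := 2) hg),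
          MemLp.coeFn_toLp ((Lp.memLp f).smul (r := 2) hg),
          Lp.coeFn_smul c f,
          Lp.coeFn_smul c (((Lp.memLp f).smul (r := 2) hg).toLp (g • ⇑f))] with x h0 h1 h3 h4
        simp only [RingHom.id_apply]
        rw [h0, h4, Pi.smul_apply, h1]
        simp only [Pi.smul_apply', Pi.smul_apply, h3]
        exact smul_comm _ _ _ }
  else 0

end Paper
namespace Paper

/-- The orthogonal projection of `L²(𝕋)` onto a closed subspace, as a map `L² → L²`. -/
def projCLM (U : Submodule ℂ L2) (hU : IsClosed (U : Set L2)) : L2 →L[ℂ] L2 :=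
  letI : CompleteSpace U := hU.completeSpace_coe
  U.subtypeL.comp (U.orthogonalProjectionOnto)

/-- The subspace `θH²` of `L²(𝕋)`. -/
def thetaH2 (θ : Tc → ℂ) : Submodule ℂ L2 := H2.map (mulLM θ)

/-- The model space `K_θ = H² ⊖ θH²`. -/
def Kmod (θ : Tc → ℂ) : Submodule ℂ L2 := H2 ⊓ (thetaH2 θ)ᗮ

lemma isClosed_Kmod (θ : Tc → ℂ) : IsClosed ((Kmod θ : Submodule ℂ L2) : Set L2) :=
  (isClosed_coeffGE 0).inter (thetaH2 θ).isClosed_orthogonal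

/-- The orthogonal projection `P_θ : L² → K_θ` (composed with the inclusion back into `L²`). -/
def Ptheta (θ : Tc → ℂ) : L2 →L[ℂ] L2 := projCLM (Kmod θ) (isClosed_Kmod θ)

/-- The orthogonal projection `P₊ : L² → H²`. -/
def Pplus : L2 →L[ℂ] L2 := projCLM H2 (isClosed_coeffGE 0)

/-- The independent variable `z = e^{it}`, as a function on the circle. -/
def zf : Tc → ℂ := fun x => fourier 1 x

/-- The conjugate variable `z̄ = e^{-it}`. -/
def zbar : Tc → ℂ := fun x => fourier (-1) x

lemma memLp_fourier (n : ℤ) : MemLp (fun x : Tc => (fourier n x : ℂ)) ⊤ μ0 := by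
  refine memLp_top_of_bound ((fourier n).continuous.aestronglyMeasurable) 1 ?_
  exact Filter.Eventually.of_forall fun x => le_of_eq (Circle.norm_coe _)

lemma memLp_zf : MemLp zf ⊤ μ0 := memLp_fourier 1

lemma memLp_zbar : MemLp zbar ⊤ μ0 := memLp_fourier (-1)

/-- The backward shift `S* : f ↦ (f - f(0))/z`, realised on `L²(𝕋)` as
`f ↦ P₊(z̄ f)`; on `H²` this is the usual backward shift. -/
def Sstar : L2 →ₗ[ℂ] L2 := (Pplus : L2 →ₗ[ℂ] L2).comp (mulLM zbar)

/-- `θ` is an inner function: it is essentially bounded, unimodular a.e. on the circle, and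
all its negative Fourier coefficients vanish (i.e. it is the boundary function of a bounded
analytic function on the disc). -/
structure IsInner (θ : Tc → ℂ) : Prop where
  memLinf : MemLp θ ⊤ μ0
  unimodular : ∀ᵐ x ∂μ0, ‖θ x‖ = 1
  analytic : ∀ n : ℤ, n < 0 → fourierCoeff θ n = 0

/-- Pointwise complex conjugation of a function on the circle. -/
def conjFun (f : Tc → ℂ) : Tc → ℂ := fun x => (starRingEnd ℂ) (f x)

lemma memLp_conj {f : Tc → ℂ} {p : ℝ≥0∞} (hf : MemLp f p μ0) : MemLp (conjFun f) p μ0 := by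
  refine ⟨continuous_star.comp_aestronglyMeasurable hf.1, ?_⟩
  have h : eLpNorm (conjFun f) p μ0 = eLpNorm f p μ0 :=
    eLpNorm_congr_norm_ae (Filter.Eventually.of_forall fun x => by
      simp [conjFun])
  rw [h]
  exact hf.2

/-- Complex conjugation on `L²(𝕋)`. -/
def conjL2 (f : L2) : L2 := (memLp_conj (Lp.memLp f)).toLp (conjFun ⇑f)

end Paper
namespace Paper

/-- The set `w·U = {h ∈ L² : h = w·k (a.e.) for some k ∈ U}`, for a fixed function `w` on the
circle and a subspace `U ⊆ L²`; this is a (not necessarily closed) subspace of `L²`. -/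
def mulSet (w : Tc → ℂ) (U : Submodule ℂ L2) : Submodule ℂ L2 where
  carrier := {h : L2 | ∃ k ∈ U, (⇑h : Tc → ℂ) =ᵐ[μ0] fun x => w x * (⇑k : Tc → ℂ) x}
  add_mem' := by
    rintro a b ⟨k₁, hk₁, ha⟩ ⟨k₂, hk₂, hb⟩
    refine ⟨k₁ + k₂, U.add_mem hk₁ hk₂, ?_⟩
    filter_upwards [ha, hb, Lp.coeFn_add a b, Lp.coeFn_add k₁ k₂] with x h1 h2 h3 h4
    simp only [h3, Pi.add_apply, h1, h2, h4, mul_add]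
  zero_mem' := by
    refine ⟨0, U.zero_mem, ?_⟩
    filter_upwards [Lp.coeFn_zero ℂ 2 μ0] with x h1
    simp [h1]
  smul_mem' := by
    rintro c a ⟨k, hk, ha⟩
    refine ⟨c • k, U.smul_mem c hk, ?_⟩
    filter_upwards [ha, Lp.coeFn_smul c a, Lp.coeFn_smul c k] with x h1 h2 h3
    simp only [h2, Pi.smul_apply, h1, h3, smul_eq_mul]
    ring

/-- `f` is an outer function: `f ∈ H²` and the polynomial multiples of `f` are dense in `H²`
(i.e. `f` is cyclic for the forward shift). -/
def IsOuter (f : L2) : Prop :=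
  f ∈ H2 ∧
    (Submodule.span ℂ (Set.range fun k : ℕ => ((mulLM zf) ^ k) f)).topologicalClosure = H2

/-- `h` is a cyclic vector for the backward shift `S*` on `H²`. -/
def CyclicSstar (h : L2) : Prop :=
  (Submodule.span ℂ (Set.range fun k : ℕ => (Sstar ^ k) h)).topologicalClosure = H2

/-- `d` divides `u` in the sense of inner functions. -/
def InnerDvd (d u : Tc → ℂ) : Prop :=
  ∃ v : Tc → ℂ, IsInner v ∧ ∀ᵐ x ∂μ0, u x = d x * v x

/-- Two inner functions have greatest common inner divisor `1`, i.e. every common inner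
divisor is a (necessarily unimodular) constant. -/
def CoprimeInner (u₁ u₂ : Tc → ℂ) : Prop :=
  ∀ d : Tc → ℂ, IsInner d → InnerDvd d u₁ → InnerDvd d u₂ → ∃ c : ℂ, ∀ᵐ x ∂μ0, d x = c

/-- The kernel of the truncated Toeplitz operator `A_g^θ = P_θ (g ·) : K_θ → K_θ`:
`f ∈ ker A_g^θ` iff `f ∈ K_θ` and `g f ⊥ K_θ`. -/
def kerA (θ g : Tc → ℂ) : Submodule ℂ L2 :=
  Kmod θ ⊓ ((Kmod θ)ᗮ).comap (mulLM g)

/-- The kernel of the dual truncated Toeplitz operator `D_g^θ = Q (g ·) : K_θ^⊥ → K_θ^⊥`: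
`f ∈ ker D_g^θ` iff `f ∈ K_θ^⊥` and `g f ⊥ K_θ^⊥`. -/
def kerD (θ g : Tc → ℂ) : Submodule ℂ L2 :=
  (Kmod θ)ᗮ ⊓ (((Kmod θ)ᗮ)ᗮ).comap (mulLM g)

/-- The space `A = {f ∈ ker D_g^θ : gf ∈ K_θ ∩ zH²}`. -/
def dualA (θ g : Tc → ℂ) : Submodule ℂ L2 :=
  kerD θ g ⊓ (Kmod θ ⊓ coeffGE 1).comap (mulLM g)

/-- The space `C = ker D_g^θ ∩ (conj H²₀ ⊕ θzH²) ∩ A`. -/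
def dualC (θ g : Tc → ℂ) : Submodule ℂ L2 :=
  kerD θ g ⊓ (coeffLT 0 ⊔ (coeffGE 1).map (mulLM θ)) ⊓ dualA θ g

end Paper
namespace Paper

/-- The vector-valued space `L²(𝕋, ℂⁿ)`, realised as an `ℓ²`-direct sum of `n` copies of
`L²(𝕋)`; the subspace `H2v n` below is the vector-valued Hardy space `H²(𝔻, ℂⁿ)`. -/
abbrev Vec (n : ℕ) : Type := PiLp 2 (fun _ : Fin n => L2)

/-- The `i`-th component, as a linear map `L²(𝕋, ℂⁿ) → L²(𝕋)`. -/
def compLM {n : ℕ} (i : Fin n) : Vec n →ₗ[ℂ] L2 where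
  toFun F := F i
  map_add' F G := rfl
  map_smul' c F := rfl

/-- Vector-valued analogue of `coeffGE`: `coeffGEv n 0 = H²(𝔻, ℂⁿ)` and
`coeffGEv n 1 = zH²(𝔻, ℂⁿ)`. -/
def coeffGEv (n : ℕ) (k : ℤ) : Submodule ℂ (Vec n) :=
  ⨅ i : Fin n, (coeffGE k).comap (compLM i)

/-- The vector-valued Hardy space `H²(𝔻, ℂⁿ)`. -/
def H2v (n : ℕ) : Submodule ℂ (Vec n) := coeffGEv n 0

/-- The vector-valued model space `K_θ(𝔻, ℂⁿ)` (all components in `K_θ`). -/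
def Kv (θ : Tc → ℂ) (n : ℕ) : Submodule ℂ (Vec n) :=
  ⨅ i : Fin n, (Kmod θ).comap (compLM i)

/-- Evaluation at the origin, `F ↦ F(0)`, for (Hardy-space) elements of `L²(𝕋, ℂⁿ)`. -/
def ev0 {n : ℕ} (F : Vec n) : EuclideanSpace ℂ (Fin n) := WithLp.toLp 2 (fun i => cf (F i) 0)

/-- Evaluation at the origin as a linear map `H²(𝔻, ℂⁿ) → ℂⁿ`. -/
def ev0LM (n : ℕ) : Vec n →ₗ[ℂ] EuclideanSpace ℂ (Fin n) where
  toFun := ev0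
  map_add' _F _G := by
    ext i
    simp [ev0, cf]
  map_smul' _c _F := by
    ext i
    simp [ev0, cf]

/-- The componentwise backward shift on `L²(𝕋, ℂⁿ)`. -/
def SstarV {n : ℕ} : Vec n →ₗ[ℂ] Vec n where
  toFun F := WithLp.toLp 2 (fun i => Sstar (F i))
  map_add' _F _G := by
    ext i
    simp
  map_smul' _c _F := by
    ext i
    simp

/-- Componentwise multiplication by a scalar `L^∞` function on `L²(𝕋, ℂⁿ)`. -/
def mulVLM (g : Tc → ℂ) {n : ℕ} : Vec n →ₗ[ℂ] Vec n where
  toFun F := WithLp.toLp 2 (fun i => mulLM g (F i))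
  map_add' _F _G := by
    ext i
    simp
  map_smul' _c _F := by
    ext i
    simp

/-- The projection onto the first `i` coordinates, `P_i : H²(𝔻, ℂⁿ) → H²(𝔻, ℂⁱ)`. -/
def projLE {n i : ℕ} (h : i ≤ n) : Vec n →ₗ[ℂ] Vec i where
  toFun F := WithLp.toLp 2 (fun j => F (Fin.castLE h j))
  map_add' F G := rfl
  map_smul' c F := rfl

/-- The `i`-th row of a matrix symbol applied to a vector function:
`F ↦ ∑ j, G i j • F j`. -/
def rowLM {n : ℕ} (G : Matrix (Fin n) (Fin n) (Tc → ℂ)) (i : Fin n) : Vec n →ₗ[ℂ] L2 :=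
  ∑ j : Fin n, (mulLM (G i j)).comp (compLM j)

/-- The kernel of the block Toeplitz operator `T_G = P₊(G ·)` on `H²(𝔻, ℂⁿ)`:
`F ∈ ker T_G` iff `F ∈ H²(𝔻, ℂⁿ)` and every component of `GF` is orthogonal to `H²`. -/
def kerT {n : ℕ} (G : Matrix (Fin n) (Fin n) (Tc → ℂ)) : Submodule ℂ (Vec n) :=
  H2v n ⊓ ⨅ i : Fin n, (H2ᗮ).comap (rowLM G i)

/-- The kernel of the matrix truncated Toeplitz operator `A_G^θ = P_θ(G ·)` on `K_θ(𝔻, ℂ²)`. -/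
def kerAv (θ : Tc → ℂ) (G : Matrix (Fin 2) (Fin 2) (Tc → ℂ)) : Submodule ℂ (Vec 2) :=
  Kv θ 2 ⊓ ⨅ i : Fin 2, ((Kmod θ)ᗮ).comap (rowLM G i)

/-- The scalar-type space `w·U ⊆ L²(𝕋, ℂⁿ)`, for a fixed vector function `w` and a
subspace `U ⊆ L²(𝕋)` of scalar functions. -/
def vecMulSet {n : ℕ} (w : Vec n) (U : Submodule ℂ L2) : Submodule ℂ (Vec n) where
  carrier := {F | ∃ k ∈ U, ∀ i : Fin n,
    (⇑(F i) : Tc → ℂ) =ᵐ[μ0] fun x => (⇑(w i) : Tc → ℂ) x * (⇑k : Tc → ℂ) x}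
  add_mem' := by
    rintro a b ⟨k₁, hk₁, ha⟩ ⟨k₂, hk₂, hb⟩
    refine ⟨k₁ + k₂, U.add_mem hk₁ hk₂, fun i => ?_⟩
    have hab : (a + b) i = a i + b i := rfl
    rw [hab]
    filter_upwards [ha i, hb i, Lp.coeFn_add (a i) (b i), Lp.coeFn_add k₁ k₂]
      with x h1 h2 h3 h4
    simp only [h3, Pi.add_apply, h1, h2, h4, mul_add]
  zero_mem' := by
    refine ⟨0, U.zero_mem, fun i => ?_⟩
    have h0 : (0 : Vec n) i = 0 := rfl
    rw [h0]
    filter_upwards [Lp.coeFn_zero ℂ 2 μ0] with x h1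
    simp [h1]
  smul_mem' := by
    rintro c a ⟨k, hk, ha⟩
    refine ⟨c • k, U.smul_mem c hk, fun i => ?_⟩
    have hc : (c • a) i = c • (a i) := rfl
    rw [hc]
    filter_upwards [ha i, Lp.coeFn_smul c (a i), Lp.coeFn_smul c k] with x h1 h2 h3
    simp only [h2, Pi.smul_apply, h1, h3, smul_eq_mul]
    ring

end Paper
namespace Paper

/-- The representation `F = F₀ k₀ + z ∑ⱼ kⱼ eⱼ` of Theorem 3.4(1): here the columns of `F₀`
are `W 0, …, W (r-1)`, the `eⱼ` are an orthonormal basis of the defect space, and the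
parameter `k = (k₀, k₁, …, k_m)` runs through a subspace of `H²(𝔻, ℂ^{r+m})`. -/
def rep1 {n r m : ℕ} (W : Fin r → Vec n) (e : Fin m → Vec n) (k : Vec (r + m)) (F : Vec n) :
    Prop :=
  ∀ i : Fin n,
    (⇑(F i) : Tc → ℂ) =ᵐ[μ0] fun x =>
      (∑ j : Fin r, (⇑(k (Fin.castAdd m j)) : Tc → ℂ) x * (⇑(W j i) : Tc → ℂ) x) +
        zf x * ∑ j : Fin m, (⇑(k (Fin.natAdd r j)) : Tc → ℂ) x * (⇑(e j i) : Tc → ℂ) x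

/-- The representation `F = z ∑ⱼ kⱼ eⱼ` of Theorem 3.4(2). -/
def rep2 {n m : ℕ} (e : Fin m → Vec n) (k : Vec m) (F : Vec n) : Prop :=
  ∀ i : Fin n,
    (⇑(F i) : Tc → ℂ) =ᵐ[μ0] fun x =>
      zf x * ∑ j : Fin m, (⇑(k j) : Tc → ℂ) x * (⇑(e j i) : Tc → ℂ) x

end Paper
namespace Paper

/-! Evaluation at `0` is injective on `M ⊖ (M ∩ zH²)`: on `M ⊆ H²` its kernel is `M ∩ zH²`, and a
vector lying both in `M ∩ zH²` and in its orthogonal complement is `0`. Hence it maps the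
orthonormal (so linearly independent) family `W` to a linearly independent one. -/

theorem disjoint_inf_orthogonal_inf_ker {𝕜 E F : Type*} [RCLike 𝕜] [NormedAddCommGroup E]
    [InnerProductSpace 𝕜 E] [AddCommGroup F] [Module 𝕜 F] {M N : Submodule 𝕜 E}
    {f : E →ₗ[𝕜] F} (h : M ⊓ LinearMap.ker f ≤ N) :
    Disjoint (M ⊓ (M ⊓ N)ᗮ) (LinearMap.ker f) := by
  rw [disjoint_iff, eq_bot_iff, ← (M ⊓ N).inf_orthogonal_eq_bot]
  rintro x ⟨⟨hxM, hx⟩, hxf⟩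
  exact ⟨⟨hxM, h ⟨hxM, hxf⟩⟩, hx⟩

theorem mem_coeffGE_one_of_mem_H2 {f : L2} (hf : f ∈ H2) (hf0 : cf f 0 = 0) :
    f ∈ coeffGE 1 := by
  rw [H2, mem_coeffGE] at hf
  rw [mem_coeffGE]
  intro m hm
  rcases (show m ≤ 0 by omega).lt_or_eq with hneg | rfl
  · exact hf m hneg
  · exact hf0

theorem H2v_inf_ker_ev0LM_le (n : ℕ) : H2v n ⊓ LinearMap.ker (ev0LM n) ≤ coeffGEv n 1 := by
  rintro F ⟨hF, hF0⟩
  simp only [H2v, coeffGEv, SetLike.mem_coe, Submodule.mem_iInf, Submodule.mem_comap] at hF ⊢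
  intro i
  exact mem_coeffGE_one_of_mem_H2 (hF i) (congrArg (· i) hF0)

theorem values_at_zero_linearly_independent_general
    {n : ℕ} (M : Submodule ℂ (Vec n))
    (hMH : M ≤ H2v n)
    (r : ℕ) (W : Fin r → Vec n)
    (hWon : Orthonormal ℂ W)
    (hWspan : Submodule.span ℂ (Set.range W) = M ⊓ (M ⊓ coeffGEv n 1)ᗮ) :
    LinearIndependent ℂ (fun j => ev0 (W j)) := by
  have hker : M ⊓ LinearMap.ker (ev0LM n) ≤ coeffGEv n 1 :=
    (inf_le_inf_right _ hMH).trans (H2v_inf_ker_ev0LM_le n)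
  refine hWon.linearIndependent.map (f := ev0LM n) ?_
  rw [hWspan]
  exact disjoint_inf_orthogonal_inf_ker hker

/-- **Lemma 3.6.** If `M ⊆ H²(𝔻, ℂⁿ)` is a closed subspace not all of whose elements vanish
at `0`, and `W₁, …, W_r` is an orthonormal basis of `W = M ⊖ (M ∩ zH²(𝔻, ℂⁿ))`, then
`W₁(0), …, W_r(0)` are linearly independent in `ℂⁿ`. -/
theorem values_at_zero_linearly_independent
    {n : ℕ} (M : Submodule ℂ (Vec n)) (hMclosed : IsClosed (M : Set (Vec n)))
    (hMH : M ≤ H2v n)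
    (hex : ∃ F ∈ M, ev0 F ≠ 0)
    (r : ℕ) (W : Fin r → Vec n)
    (hWon : Orthonormal ℂ W)
    (hWspan : Submodule.span ℂ (Set.range W) = M ⊓ (M ⊓ coeffGEv n 1)ᗮ) :
    LinearIndependent ℂ (fun j => ev0 (W j)) :=
  values_at_zero_linearly_independent_general M hMH r W hWon hWspan

end Paper
end
end

section
/- Let θ be inner and g ∈ L^∞(T), assume ker D_g^θ is finite-dimensional, and set A := {f ∈ ker D_g^θ : gf ∈ K_θ ∩ zH²} and C := ker D_g^θ ∩ (H̄²₀ ⊕ θzH²) ∩ A. If ker D_g^θ ≠ {0}, then 1 ≤ dim(ker D_g^θ ⊖ C) ≤ 2. -/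
open MeasureTheory Complex Real
open scoped ENNReal ComplexConjugate

noncomputable section

/-!
`C` is cut out of `ker D_g^θ` by the two linear conditions `(gf)^(0) = 0` and `⟪θ, f⟫ = 0`:
for `f ∈ K_θ^⊥ = H̄²₀ ⊕ θH²` the second one says that the `θH²`-component of `f` lies in `θzH²`.
Hence `C` has codimension at most `2` in the kernel.

If the codimension were `0`, multiplication by `z̄` would map the kernel into itself. Being
injective on a finite-dimensional space it would be onto, so the kernel would be invariant under
`z` as well, hence under every `zᵐ`, `m ∈ ℤ`. Then `⟪θ, zᵐ f⟫ = 0` for all `m`, i.e. all Fourier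
coefficients of `θ̄ f` vanish, and `f = θ θ̄ f = 0` because `|θ| = 1`.
-/

theorem Submodule.finrank_le_finrank_inf_ker_add_finrank {K V W : Type*} [DivisionRing K]
    [AddCommGroup V] [Module K V] [AddCommGroup W] [Module K W] [FiniteDimensional K W]
    (p : Submodule K V) [FiniteDimensional K p] (f : V →ₗ[K] W) :
    Module.finrank K p ≤
      Module.finrank K (p ⊓ LinearMap.ker f : Submodule K V) + Module.finrank K W := by
  have h := (f.domRestrict p).finrank_range_add_finrank_ker
  rw [LinearMap.ker_domRestrict, ← Submodule.finrank_map_subtype_eq,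
    Submodule.map_comap_subtype] at h
  have := Submodule.finrank_le (LinearMap.range (f.domRestrict p))
  omega

theorem Submodule.mapsTo_of_leftInverse {K V : Type*} [DivisionRing K]
    [AddCommGroup V] [Module K V] {S T : V →ₗ[K] V} (hST : Function.LeftInverse S T)
    {p : Submodule K V} [FiniteDimensional K p] (hT : Set.MapsTo T p p) :
    Set.MapsTo S p p := by
  have hsurj : Function.Surjective (T.restrict hT) :=
    LinearMap.injective_iff_surjective.mp fun x y hxy =>
      Subtype.ext (hST.injective (congrArg Subtype.val hxy))
  intro x hx
  obtain ⟨y, hy⟩ := hsurj ⟨x, hx⟩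
  have hTy : T y = x := congrArg Subtype.val hy
  rw [← hTy, hST y]
  exact y.2

namespace Paper

open scoped InnerProductSpace

lemma cf_eq_fourierCoeff (f : L2) (n : ℤ) : cf f n = fourierCoeff (⇑f) n :=
  fourierBasis_repr f n

lemma cf_eq_inner (f : L2) (n : ℤ) : cf f n = ⟪(fourierLp 2 n : L2), f⟫_ℂ := by
  rw [cf, coeffCLM, LinearMap.mkContinuous_apply, LinearMap.coe_mk, AddHom.coe_mk,
    fourierBasis.repr_apply_apply, coe_fourierBasis]

lemma cf_fourierLp (m n : ℤ) : cf (fourierLp 2 m : L2) n = if m = n then 1 else 0 := by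
  classical
  rw [cf, coeffCLM, LinearMap.mkContinuous_apply, LinearMap.coe_mk, AddHom.coe_mk,
    ← coe_fourierBasis, fourierBasis.repr_self, lp.single_apply]
  split_ifs <;> simp_all

lemma mem_coeffLT {k : ℤ} {f : L2} : f ∈ coeffLT k ↔ ∀ n, k ≤ n → cf f n = 0 := by
  simp [coeffLT, cf, Submodule.mem_iInf, LinearMap.mem_ker]

lemma mem_coeffGE_add_one_iff {k : ℤ} {f : L2} (hf : f ∈ coeffGE k) :
    f ∈ coeffGE (k + 1) ↔ cf f k = 0 := by
  refine ⟨fun h => mem_coeffGE.mp h k (lt_add_one k), fun hk => mem_coeffGE.mpr fun n hn => ?_⟩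
  rcases (Int.lt_add_one_iff.mp hn).lt_or_eq with hlt | rfl
  · exact mem_coeffGE.mp hf n hlt
  · exact hk

lemma eq_zero_of_forall_cf_eq_zero {f : L2} (hf : ∀ n : ℤ, cf f n = 0) : f = 0 :=
  fourierBasis.repr.map_eq_zero_iff.mp (lp.ext (funext hf))

lemma inner_eq_tsum_cf (f h : L2) : ⟪f, h⟫_ℂ = ∑' n : ℤ, conj (cf f n) * cf h n := by
  rw [← fourierBasis.repr.inner_map_map f h, lp.inner_eq_tsum]
  refine tsum_congr fun n => ?_
  rw [RCLike.inner_apply, mul_comm]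
  rfl

lemma inner_eq_zero_of_mem_coeffGE_of_mem_coeffLT {a : ℤ} {u v : L2} (hu : u ∈ coeffGE a)
    (hv : v ∈ coeffLT a) : ⟪u, v⟫_ℂ = 0 := by
  rw [inner_eq_tsum_cf]
  refine (tsum_congr fun n => ?_).trans tsum_zero
  rcases lt_or_ge n a with hn | hn
  · rw [mem_coeffGE.mp hu n hn, map_zero, zero_mul]
  · rw [mem_coeffLT.mp hv n hn, mul_zero]

lemma inner_eq_integral (f h : L2) : ⟪f, h⟫_ℂ = ∫ x, conj (f x) * h x ∂μ0 := by
  rw [MeasureTheory.L2.inner_def]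
  exact integral_congr_ae (Filter.Eventually.of_forall fun x => mul_comm _ _)

lemma mulLM_coeFn {g : Tc → ℂ} (hg : MemLp g ⊤ μ0) (f : L2) :
    ⇑(mulLM g f) =ᵐ[μ0] fun x => g x * (⇑f : Tc → ℂ) x := by
  rw [mulLM, dif_pos hg]
  filter_upwards [MemLp.coeFn_toLp ((Lp.memLp f).smul (r := 2) hg)] with x h
  simpa [Pi.smul_apply', smul_eq_mul] using h

lemma mulLM_comm {a b : Tc → ℂ} (ha : MemLp a ⊤ μ0) (hb : MemLp b ⊤ μ0) (f : L2) :
    mulLM a (mulLM b f) = mulLM b (mulLM a f) := by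
  apply Lp.ext (p := (2 : ℝ≥0∞))
  filter_upwards [mulLM_coeFn ha (mulLM b f), mulLM_coeFn hb f,
    mulLM_coeFn hb (mulLM a f), mulLM_coeFn ha f] with x h1 h2 h3 h4
  rw [h1, h2, h3, h4]
  ring

lemma mulLM_mulLM_of_mul_eq_one {a b : Tc → ℂ} (ha : MemLp a ⊤ μ0) (hb : MemLp b ⊤ μ0)
    (hab : ∀ᵐ x ∂μ0, a x * b x = 1) (f : L2) : mulLM a (mulLM b f) = f := by
  apply Lp.ext (p := (2 : ℝ≥0∞))
  filter_upwards [mulLM_coeFn ha (mulLM b f), mulLM_coeFn hb f, hab] with x h1 h2 h3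
  rw [h1, h2, ← mul_assoc, h3, one_mul]

lemma inner_mulLM_right {a : Tc → ℂ} (ha : MemLp a ⊤ μ0) (u v : L2) :
    ⟪u, mulLM a v⟫_ℂ = ⟪mulLM (conjFun a) u, v⟫_ℂ := by
  rw [inner_eq_integral, inner_eq_integral]
  refine integral_congr_ae ?_
  filter_upwards [mulLM_coeFn ha v, mulLM_coeFn (memLp_conj ha) u] with x h1 h2
  rw [h1, h2, conjFun, map_mul, Complex.conj_conj]
  ring

lemma norm_mulLM_of_unimodular {θ : Tc → ℂ} (hθ : MemLp θ ⊤ μ0) (hu : ∀ᵐ x ∂μ0, ‖θ x‖ = 1)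
    (f : L2) : ‖mulLM θ f‖ = ‖f‖ := by
  rw [Lp.norm_def, Lp.norm_def]
  congr 1
  refine eLpNorm_congr_norm_ae ?_
  filter_upwards [mulLM_coeFn hθ f, hu] with x h1 h2
  rw [h1, norm_mul, h2, one_mul]

lemma cf_mulLM_conjFun_fourierLp {θ : Tc → ℂ} (hθ : MemLp θ ⊤ μ0) (n m : ℤ) :
    cf (mulLM (conjFun θ) (fourierLp 2 n : L2)) m = conj (fourierCoeff θ (n - m)) := by
  have hfn : (fun x : Tc => conjFun θ x * (fourierLp 2 n : L2) x)
      =ᵐ[μ0] fun x => conjFun θ x * fourier n x := by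
    filter_upwards [coeFn_fourierLp 2 n] with x hx
    rw [hx]
  rw [cf_eq_fourierCoeff, fourierCoeff_congr_ae (mulLM_coeFn (memLp_conj hθ) _),
    fourierCoeff_congr_ae hfn, fourierCoeff, fourierCoeff, ← integral_conj]
  refine integral_congr_ae (Filter.Eventually.of_forall fun x => ?_)
  simp only [conjFun, smul_eq_mul, map_mul, ← fourier_neg, neg_neg]
  rw [show n - m = -m + n by ring, fourier_add]
  ring

lemma mulLM_fourier_zero (f : L2) : mulLM (fun x : Tc => (fourier 0 x : ℂ)) f = f := by
  apply Lp.ext (p := (2 : ℝ≥0∞))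
  filter_upwards [mulLM_coeFn (memLp_fourier 0) f] with x h1
  rw [h1, fourier_zero, one_mul]

lemma mulLM_fourier_add (m n : ℤ) (f : L2) :
    mulLM (fun x : Tc => (fourier (m + n) x : ℂ)) f
      = mulLM (fun x : Tc => (fourier m x : ℂ)) (mulLM (fun x : Tc => (fourier n x : ℂ)) f) := by
  apply Lp.ext (p := (2 : ℝ≥0∞))
  filter_upwards [mulLM_coeFn (memLp_fourier (m + n)) f,
    mulLM_coeFn (memLp_fourier m) (mulLM (fun x : Tc => (fourier n x : ℂ)) f),
    mulLM_coeFn (memLp_fourier n) f] with x h1 h2 h3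
  rw [h1, h2, h3, fourier_add]
  ring

lemma conjFun_zbar : conjFun zbar = zf := by
  funext x
  rw [conjFun, zbar, zf, fourier_neg, Complex.conj_conj]

lemma leftInverse_mulLM_zf_mulLM_zbar : Function.LeftInverse (mulLM zf) (mulLM zbar) :=
  mulLM_mulLM_of_mul_eq_one memLp_zf memLp_zbar <| Filter.Eventually.of_forall fun x => by
    rw [zf, zbar, ← fourier_add, add_neg_cancel, fourier_zero]

lemma cf_mulLM_fourier (k : ℤ) (f : L2) (n : ℤ) :
    cf (mulLM (fun x : Tc => (fourier k x : ℂ)) f) n = cf f (n - k) := by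
  rw [cf_eq_fourierCoeff, cf_eq_fourierCoeff,
    fourierCoeff_congr_ae (mulLM_coeFn (memLp_fourier k) f), fourierCoeff, fourierCoeff]
  refine integral_congr_ae (Filter.Eventually.of_forall fun x => ?_)
  simp only [smul_eq_mul]
  rw [show -(n - k) = -n + k by ring, fourier_add]
  ring

lemma cf_mulLM_zbar (f : L2) (n : ℤ) : cf (mulLM zbar f) n = cf f (n + 1) :=
  (cf_mulLM_fourier (-1) f n).trans (by rw [sub_neg_eq_add])

lemma cf_mulLM_zf (f : L2) (n : ℤ) : cf (mulLM zf f) n = cf f (n - 1) :=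
  cf_mulLM_fourier 1 f n

lemma mulLM_zbar_mem_coeffGE {a b : ℤ} (hab : b + 1 ≤ a) {f : L2} (hf : f ∈ coeffGE a) :
    mulLM zbar f ∈ coeffGE b :=
  mem_coeffGE.mpr fun n hn => by
    rw [cf_mulLM_zbar]
    exact mem_coeffGE.mp hf _ (by omega)

lemma mulLM_zf_mem_coeffGE {a b : ℤ} (hab : b ≤ a + 1) {f : L2} (hf : f ∈ coeffGE a) :
    mulLM zf f ∈ coeffGE b :=
  mem_coeffGE.mpr fun n hn => by
    rw [cf_mulLM_zf]
    exact mem_coeffGE.mp hf _ (by omega)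

lemma mulLM_fourier_mem_of_mapsTo {p : Submodule ℂ L2} (hzf : Set.MapsTo (mulLM zf) p p)
    (hzbar : Set.MapsTo (mulLM zbar) p p) {f : L2} (hf : f ∈ p) (m : ℤ) :
    mulLM (fun x : Tc => (fourier m x : ℂ)) f ∈ p := by
  induction m using Int.induction_on with
  | zero => rwa [mulLM_fourier_zero]
  | succ i ih =>
    rw [add_comm, mulLM_fourier_add]
    exact hzf ih
  | pred i ih =>
    rw [sub_eq_neg_add, mulLM_fourier_add]
    exact hzbar ih

section Inner

variable {θ : Tc → ℂ}

def IsInner.toL2 (hθ : IsInner θ) : L2 := (hθ.memLinf.mono_exponent le_top).toLp θ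

lemma IsInner.coeFn_toL2 (hθ : IsInner θ) : ⇑hθ.toL2 =ᵐ[μ0] θ :=
  MemLp.coeFn_toLp _

lemma IsInner.toL2_mem_H2 (hθ : IsInner θ) : hθ.toL2 ∈ H2 :=
  mem_coeffGE.mpr fun n hn => by
    rw [cf_eq_fourierCoeff, fourierCoeff_congr_ae hθ.coeFn_toL2]
    exact hθ.analytic n hn

lemma IsInner.conjFun_mul_self (hθ : IsInner θ) : ∀ᵐ x ∂μ0, conjFun θ x * θ x = 1 := by
  filter_upwards [hθ.unimodular] with x hx
  rw [conjFun, mul_comm, Complex.mul_conj, Complex.normSq_eq_norm_sq, hx]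
  norm_num

lemma IsInner.mulLM_mem_coeffGE (hθ : IsInner θ) {a : ℤ} {k : L2} (hk : k ∈ coeffGE a) :
    mulLM θ k ∈ coeffGE a := by
  -- `(θk)^(n) = ∑ₘ θ̂(n - m) k̂(m)`, and for `n < a` every term has `m < a` or `n - m < 0`.
  refine mem_coeffGE.mpr fun n hn => ?_
  rw [cf_eq_inner, inner_mulLM_right hθ.memLinf, inner_eq_tsum_cf]
  refine (tsum_congr fun m => ?_).trans tsum_zero
  rw [cf_mulLM_conjFun_fourierLp hθ.memLinf, Complex.conj_conj]
  rcases lt_or_ge m a with hm | hm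
  · rw [mem_coeffGE.mp hk m hm, mul_zero]
  · rw [hθ.analytic (n - m) (by omega), zero_mul]

lemma thetaH2_le_H2 (hθ : IsInner θ) : thetaH2 θ ≤ H2 := by
  rintro _ ⟨k, hk, rfl⟩
  exact hθ.mulLM_mem_coeffGE hk

lemma isClosed_thetaH2 (hθ : IsInner θ) : IsClosed ((thetaH2 θ : Submodule ℂ L2) : Set L2) := by
  let e : L2 →ₗᵢ[ℂ] L2 := ⟨mulLM θ, norm_mulLM_of_unimodular hθ.memLinf hθ.unimodular⟩
  have he : ((thetaH2 θ : Submodule ℂ L2) : Set L2) = e '' (H2 : Set L2) := rfl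
  rw [he]
  exact ((LinearIsometry.isComplete_image_iff e).mpr (isClosed_coeffGE 0).isComplete).isClosed

lemma inner_toL2_mulLM (hθ : IsInner θ) (v : L2) : ⟪hθ.toL2, mulLM θ v⟫_ℂ = cf v 0 := by
  rw [inner_eq_integral, cf_eq_fourierCoeff, fourierCoeff]
  refine integral_congr_ae ?_
  filter_upwards [hθ.coeFn_toL2, mulLM_coeFn hθ.memLinf v, hθ.conjFun_mul_self]
    with x h1 h2 h3
  rw [h1, h2, neg_zero, fourier_zero, one_smul, ← mul_assoc, ← conjFun, h3, one_mul]

lemma cf_mulLM_conjFun_eq_inner (hθ : IsInner θ) (f : L2) (m : ℤ) :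
    cf (mulLM (conjFun θ) f) m = ⟪hθ.toL2, mulLM (fun x : Tc => (fourier (-m) x : ℂ)) f⟫_ℂ := by
  rw [cf_eq_fourierCoeff, fourierCoeff_congr_ae (mulLM_coeFn (memLp_conj hθ.memLinf) f),
    inner_eq_integral, fourierCoeff]
  refine integral_congr_ae ?_
  filter_upwards [hθ.coeFn_toL2, mulLM_coeFn (memLp_fourier (-m)) f] with x h1 h2
  rw [h1, h2, conjFun, smul_eq_mul]
  ring

lemma eq_zero_of_forall_inner_toL2_mulLM_fourier (hθ : IsInner θ) {f : L2}
    (hf : ∀ m : ℤ, ⟪hθ.toL2, mulLM (fun x : Tc => (fourier m x : ℂ)) f⟫_ℂ = 0) : f = 0 := by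
  have hconj : mulLM (conjFun θ) f = 0 :=
    eq_zero_of_forall_cf_eq_zero fun m => (cf_mulLM_conjFun_eq_inner hθ f m).trans (hf (-m))
  rw [← mulLM_mulLM_of_mul_eq_one hθ.memLinf (memLp_conj hθ.memLinf)
    (hθ.conjFun_mul_self.mono fun x hx => by rwa [mul_comm]) f, hconj, map_zero]

end Inner

section ModelSpace

variable {θ : Tc → ℂ}

lemma thetaH2_le_orthogonal_Kmod : thetaH2 θ ≤ (Kmod θ)ᗮ := fun _ hv =>
  (Submodule.mem_orthogonal _ _).mpr fun _ hu => (inner_eq_zero_symm).mp (hu.2 _ hv)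

lemma coeffLT_le_orthogonal_Kmod : coeffLT 0 ≤ (Kmod θ)ᗮ := fun _ hv =>
  (Submodule.mem_orthogonal _ _).mpr fun _ hu =>
    inner_eq_zero_of_mem_coeffGE_of_mem_coeffLT hu.1 hv

lemma orthogonal_orthogonal_Kmod : (Kmod θ)ᗮᗮ = Kmod θ :=
  haveI : CompleteSpace (Kmod θ) := (isClosed_Kmod θ).completeSpace_coe
  Submodule.orthogonal_orthogonal _

lemma mem_kerD_iff {g : Tc → ℂ} {f : L2} :
    f ∈ kerD θ g ↔ f ∈ (Kmod θ)ᗮ ∧ mulLM g f ∈ Kmod θ := by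
  rw [kerD, Submodule.mem_inf, Submodule.mem_comap, orthogonal_orthogonal_Kmod]

lemma orthogonal_H2_le_coeffLT : H2ᗮ ≤ coeffLT 0 := fun v hv =>
  mem_coeffLT.mpr fun n hn => by
    rw [cf_eq_inner]
    exact (Submodule.mem_orthogonal _ _).mp hv _
      (mem_coeffGE.mpr fun m hm => by rw [cf_fourierLp, if_neg (by omega)])

lemma H2_le_Kmod_sup_thetaH2 (hθ : IsInner θ) : H2 ≤ Kmod θ ⊔ thetaH2 θ := by
  have : CompleteSpace (thetaH2 θ) := (isClosed_thetaH2 hθ).completeSpace_coe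
  intro h hh
  obtain ⟨y, hy, z, hz, rfl⟩ := (thetaH2 θ).exists_add_mem_mem_orthogonal h
  have hzH2 : z ∈ H2 := by
    simpa using H2.sub_mem hh (thetaH2_le_H2 hθ hy)
  rw [add_comm]
  exact Submodule.add_mem_sup ⟨hzH2, hz⟩ hy

lemma orthogonal_Kmod_le_coeffLT_sup_thetaH2 (hθ : IsInner θ) :
    (Kmod θ)ᗮ ≤ coeffLT 0 ⊔ thetaH2 θ := by
  have : CompleteSpace (thetaH2 θ) := (isClosed_thetaH2 hθ).completeSpace_coe
  intro f hf
  obtain ⟨y, hy, z, hz, rfl⟩ := (thetaH2 θ).exists_add_mem_mem_orthogonal f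
  have hzK : z ∈ (Kmod θ)ᗮ := by
    simpa using (Kmod θ)ᗮ.sub_mem hf (thetaH2_le_orthogonal_Kmod hy)
  have hzH2 : z ∈ H2ᗮ := Submodule.orthogonal_le (H2_le_Kmod_sup_thetaH2 hθ)
    (Submodule.inf_orthogonal (Kmod θ) (thetaH2 θ) ▸ ⟨hzK, hz⟩)
  rw [add_comm]
  exact Submodule.add_mem_sup (orthogonal_H2_le_coeffLT hzH2) hy

lemma inner_toL2_add_mulLM (hθ : IsInner θ) {u : L2} (hu : u ∈ coeffLT 0) (k : L2) :
    ⟪hθ.toL2, u + mulLM θ k⟫_ℂ = cf k 0 := by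
  rw [inner_add_right, inner_eq_zero_of_mem_coeffGE_of_mem_coeffLT hθ.toL2_mem_H2 hu,
    inner_toL2_mulLM, zero_add]

lemma mem_coeffLT_sup_iff_inner_toL2_eq_zero (hθ : IsInner θ) {f : L2} (hf : f ∈ (Kmod θ)ᗮ) :
    f ∈ coeffLT 0 ⊔ (coeffGE 1).map (mulLM θ) ↔ ⟪hθ.toL2, f⟫_ℂ = 0 := by
  constructor
  · intro hmem
    obtain ⟨u, hu, _, ⟨k, hk, rfl⟩, rfl⟩ := Submodule.mem_sup.mp hmem
    rw [inner_toL2_add_mulLM hθ hu]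
    exact mem_coeffGE.mp hk 0 zero_lt_one
  · intro h0
    obtain ⟨u, hu, _, ⟨k, hk, rfl⟩, rfl⟩ :=
      Submodule.mem_sup.mp (orthogonal_Kmod_le_coeffLT_sup_thetaH2 hθ hf)
    rw [inner_toL2_add_mulLM hθ hu] at h0
    exact Submodule.add_mem_sup hu (Submodule.mem_map_of_mem ((mem_coeffGE_add_one_iff hk).mpr h0))

lemma mulLM_zbar_mem_orthogonal_Kmod (hθ : IsInner θ) {f : L2}
    (hf : f ∈ coeffLT 0 ⊔ (coeffGE 1).map (mulLM θ)) : mulLM zbar f ∈ (Kmod θ)ᗮ := by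
  obtain ⟨u, hu, _, ⟨k, hk, rfl⟩, rfl⟩ := Submodule.mem_sup.mp hf
  rw [map_add, mulLM_comm memLp_zbar hθ.memLinf]
  refine add_mem (coeffLT_le_orthogonal_Kmod (mem_coeffLT.mpr fun n hn => ?_))
    (thetaH2_le_orthogonal_Kmod (Submodule.mem_map_of_mem (mulLM_zbar_mem_coeffGE le_rfl hk)))
  rw [cf_mulLM_zbar]
  exact mem_coeffLT.mp hu _ (by omega)

lemma mulLM_zbar_mem_Kmod (hθ : IsInner θ) {h : L2} (hK : h ∈ Kmod θ) (h1 : h ∈ coeffGE 1) :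
    mulLM zbar h ∈ Kmod θ := by
  refine ⟨mulLM_zbar_mem_coeffGE le_rfl h1, (Submodule.mem_orthogonal _ _).mpr ?_⟩
  rintro _ ⟨k, hk, rfl⟩
  rw [inner_mulLM_right memLp_zbar, conjFun_zbar, mulLM_comm memLp_zf hθ.memLinf]
  exact (Submodule.mem_orthogonal _ _).mp hK.2 _
    (Submodule.mem_map_of_mem (mulLM_zf_mem_coeffGE (by norm_num) hk))

end ModelSpace

section DualToeplitz

variable {θ g : Tc → ℂ}

lemma dualC_le_kerD : dualC θ g ≤ kerD θ g := fun _ hf => hf.1.1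

lemma mulLM_zbar_mem_kerD_of_mem_dualC (hθ : IsInner θ) (hg : MemLp g ⊤ μ0) {f : L2}
    (hf : f ∈ dualC θ g) : mulLM zbar f ∈ kerD θ g := by
  refine mem_kerD_iff.mpr ⟨mulLM_zbar_mem_orthogonal_Kmod hθ hf.1.2, ?_⟩
  rw [mulLM_comm hg memLp_zbar]
  exact mulLM_zbar_mem_Kmod hθ (mem_kerD_iff.mp hf.1.1).2 hf.2.2.2

def dualCConstraints (hθ : IsInner θ) (g : Tc → ℂ) : L2 →ₗ[ℂ] ℂ × ℂ :=
  ((coeffCLM 0 : L2 →ₗ[ℂ] ℂ) ∘ₗ mulLM g).prod (innerₛₗ ℂ hθ.toL2)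

lemma dualC_eq_kerD_inf_ker (hθ : IsInner θ) :
    dualC θ g = kerD θ g ⊓ LinearMap.ker (dualCConstraints hθ g) := by
  ext f
  simp only [dualC, dualA, dualCConstraints, Submodule.mem_inf, Submodule.mem_comap,
    LinearMap.mem_ker, LinearMap.prod_apply, Function.prod_apply, Prod.mk_eq_zero,
    LinearMap.comp_apply, innerₛₗ_apply_apply, ContinuousLinearMap.coe_coe]
  constructor
  · rintro ⟨⟨hK, hsup⟩, -, -, hg1⟩
    exact ⟨hK, mem_coeffGE.mp hg1 0 zero_lt_one,
      (mem_coeffLT_sup_iff_inner_toL2_eq_zero hθ (mem_kerD_iff.mp hK).1).mp hsup⟩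
  · rintro ⟨hK, hg0, hθ0⟩
    have hgK := (mem_kerD_iff.mp hK).2
    exact ⟨⟨hK, (mem_coeffLT_sup_iff_inner_toL2_eq_zero hθ (mem_kerD_iff.mp hK).1).mpr hθ0⟩,
      hK, hgK, (mem_coeffGE_add_one_iff hgK.1).mpr hg0⟩

lemma finrank_kerD_le_finrank_dualC_add_two (hθ : IsInner θ) [FiniteDimensional ℂ (kerD θ g)] :
    Module.finrank ℂ (kerD θ g) ≤ Module.finrank ℂ (dualC θ g) + 2 := by
  have h := (kerD θ g).finrank_le_finrank_inf_ker_add_finrank (dualCConstraints hθ g)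
  rwa [← dualC_eq_kerD_inf_ker, Module.finrank_prod, Module.finrank_self] at h

lemma kerD_eq_bot_of_dualC_eq (hθ : IsInner θ) (hg : MemLp g ⊤ μ0)
    [FiniteDimensional ℂ (kerD θ g)] (hC : dualC θ g = kerD θ g) : kerD θ g = ⊥ := by
  have hzbar : Set.MapsTo (mulLM zbar) (kerD θ g) (kerD θ g) := fun f hf =>
    mulLM_zbar_mem_kerD_of_mem_dualC hθ hg (hC ▸ hf)
  have hzf := Submodule.mapsTo_of_leftInverse leftInverse_mulLM_zf_mulLM_zbar hzbar
  refine (Submodule.eq_bot_iff _).mpr fun f hf =>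
    eq_zero_of_forall_inner_toL2_mulLM_fourier hθ fun m => ?_
  have hm : _ ∈ dualC θ g := hC ▸ mulLM_fourier_mem_of_mapsTo hzf hzbar hf m
  exact (mem_coeffLT_sup_iff_inner_toL2_eq_zero hθ (mem_kerD_iff.mp hm.1.1).1).mp hm.1.2

end DualToeplitz

/-- **Corollary 7.2.**  If `ker D_g^θ` is finite-dimensional and nonzero, then
`1 ≤ dim (ker D_g^θ ⊖ C) ≤ 2`. -/
theorem dim_kernel_dual_truncated_toeplitz_minus_C
    (θ g : Tc → ℂ) (hθ : IsInner θ) (hg : MemLp g ⊤ μ0)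
    (hfd : FiniteDimensional ℂ ↥(kerD θ g))
    (hne : kerD θ g ≠ ⊥) :
    1 ≤ Module.finrank ℂ ↥(kerD θ g ⊓ (dualC θ g)ᗮ) ∧
      Module.finrank ℂ ↥(kerD θ g ⊓ (dualC θ g)ᗮ) ≤ 2 := by
  have hsum := Submodule.finrank_add_inf_finrank_orthogonal (dualC_le_kerD (θ := θ) (g := g))
  have hle := finrank_kerD_le_finrank_dualC_add_two (g := g) hθ
  have hlt : Module.finrank ℂ (dualC θ g) < Module.finrank ℂ (kerD θ g) :=
    Submodule.finrank_lt_finrank_of_lt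
      (dualC_le_kerD.lt_of_ne fun hC => hne (kerD_eq_bot_of_dualC_eq hθ hg hC))
  rw [inf_comm] at hsum
  omega

end Paper
end
end
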